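/- arXiv:1811.11141 — 5 statements merged into one kernel-verified Lean document; each statement's English description precedes it below -/
import Mathlib

section
/- If τc ≤ τb and τb − τc < a, then max(τc, τb) + T(p₂ + p₃) < max(τc + T(p₃), τb) + T(p₂), where T(M) = a + b·M with a > 0, b ≥ 0, and p₂, p₃ > 0. -/
/-! Merging the two all-reduces saves one startup latency `a`, while the merged one can start
no later than `τc + T p₃`; the delay `τb - τc` it adds over starting at `τc` is less than `a`. -/

lemma map_add_add_eq_of_affine {a b : ℝ} {T : ℝ → ℝ} (hT : ∀ M, T M = a + b * M)
    (x y : ℝ) : T (x + y) + a = T x + T y := by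
  simp only [hT]
  ring

theorem merge_condition_C2_general (a b τc τb p₂ p₃ : ℝ) (hτ₁ : τc ≤ τb) (hτ₂ : τb - τc < a)
    (T : ℝ → ℝ) (hT : ∀ M, T M = a + b * M) :
    max τc τb + T (p₂ + p₃) < max (τc + T p₃) τb + T p₂ := by
  calc max τc τb + T (p₂ + p₃) = τb + T (p₂ + p₃) := by rw [max_eq_right hτ₁]
    _ < τc + (T (p₂ + p₃) + a) := by linarith
    _ = τc + T p₃ + T p₂ := by rw [map_add_add_eq_of_affine hT]; ring
    _ ≤ max (τc + T p₃) τb + T p₂ := by gcongr; exact le_max_left _ _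

theorem merge_condition_C2 (a b τc τb p₂ p₃ : ℝ) (ha : 0 < a) (hb : 0 ≤ b)
    (hp₂ : 0 < p₂) (hp₃ : 0 < p₃) (hτ₁ : τc ≤ τb) (hτ₂ : τb - τc < a)
    (T : ℝ → ℝ) (hT : ∀ M, T M = a + b * M) :
    max τc τb + T (p₂ + p₃) < max (τc + T p₃) τb + T p₂ :=
  merge_condition_C2_general a b τc τb p₂ p₃ hτ₁ hτ₂ T hT
end

section
/- Merging is beneficial if and only if τb − τc < a: for T(M) = a + b·M with a > 0, b ≥ 0 and p₂, p₃ > 0, the inequality max(τc, τb) + T(p₂ + p₃) < max(τc + T(p₃), τb) + T(p₂) holds if and only if τb − τc < a. -/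
/-!
After cancelling the common cost `a + b p₂`, the left side is `max (τc + b p₃) (τb + b p₃)` and the
right side is `max (τc + a + b p₃) τb`. The first term on the left always loses to `τc + a + b p₃`
because `a > 0`, and the second can never beat `τb` because `b p₃ ≥ 0`; so everything hinges on
`τb + b p₃ < τc + a + b p₃`, i.e. `τb - τc < a`.
-/

theorem max_add_lt_max_add_iff {α : Type*} [AddCommGroup α] [LinearOrder α] [IsOrderedAddMonoid α]
    {x y a d : α} (ha : 0 < a) (hd : 0 ≤ d) :
    max x y + d < max (x + a + d) y ↔ y - x < a := by
  have hx : x + d < x + a + d := by simpa [add_right_comm x a d] using ha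
  have hy : ¬ y + d < y := by simpa using hd
  have hy_iff : y + d < x + a + d ↔ y - x < a := by
    rw [add_lt_add_iff_right, sub_lt_iff_lt_add']
  rw [← max_add_add_right, max_lt_iff, lt_max_iff, lt_max_iff, ← hy_iff]
  tauto

theorem merge_beneficial_iff_general (a b τc τb p₂ p₃ : ℝ) (ha : 0 < a) (hb : 0 ≤ b)
    (hp₃ : 0 < p₃)
    (T : ℝ → ℝ) (hT : ∀ M, T M = a + b * M) :
    max τc τb + T (p₂ + p₃) < max (τc + T p₃) τb + T p₂ ↔ τb - τc < a := by
  rw [hT, hT, hT, show max τc τb + (a + b * (p₂ + p₃)) = max τc τb + b * p₃ + (a + b * p₂) by ring,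
    show τc + (a + b * p₃) = τc + a + b * p₃ by ring, add_lt_add_iff_right]
  exact max_add_lt_max_add_iff ha (mul_nonneg hb hp₃.le)

theorem merge_beneficial_iff (a b τc τb p₂ p₃ : ℝ) (ha : 0 < a) (hb : 0 ≤ b)
    (hp₂ : 0 < p₂) (hp₃ : 0 < p₃)
    (T : ℝ → ℝ) (hT : ∀ M, T M = a + b * M) :
    max τc τb + T (p₂ + p₃) < max (τc + T p₃) τb + T p₂ ↔ τb - τc < a :=
  merge_beneficial_iff_general a b τc τb p₂ p₃ ha hb hp₃ T hT
end

section
/- In WFBP with τb(l) = τb(l+1) + tb(l+1), if for all 2 ≤ l ≤ L one has tc(l) ≤ tb(l−1), then the communication of every layer l ≥ 2 finishes by the time layer l−1's backward computation finishes, i.e., τc(l) + tc(l) ≤ τb(l−1) + tb(l−1) for all 2 ≤ l ≤ L, and consequently the iteration time equals t_f + Σₗ tb(l) + tc(1). -/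
/-!
Under the hiding condition `tc (l + 1) ≤ tb l`, the gradient of layer `l + 1` is fully sent
while layer `l` is still computing its backward pass, so the communication of every layer starts
exactly when its backward computation ends, `τc l = τb l + tb l` (downward induction from `L`).
The iteration time is then the end of the backward pass of layer `1`, i.e. `tf + ∑ tb`, plus the
one communication that cannot be hidden, `tc 1`.
-/

open Finset

namespace WFBP

variable {L : ℕ} {tf : ℝ} {tb tc τb τc : ℕ → ℝ}

theorem backward_end_eq_add_sum (hτbL : τb L = tf)
    (hτb : ∀ l, 1 ≤ l → l < L → τb l = τb (l + 1) + tb (l + 1))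
    {l : ℕ} (hl : 1 ≤ l) (hlL : l ≤ L) :
    τb l + tb l = tf + ∑ k ∈ Icc l L, tb k := by
  induction hlL using Nat.decreasingInduction with
  | self => rw [hτbL, Icc_self, sum_singleton]
  | of_succ k hkL ih =>
    rw [hτb k hl hkL, ih (by omega), ← add_sum_Ioc_eq_sum_Icc hkL.le, ← Icc_add_one_left_eq_Ioc]
    ring

theorem comm_end_le_backward_end
    (hτb : ∀ l, 1 ≤ l → l < L → τb l = τb (l + 1) + tb (l + 1))
    (hhide : ∀ l, 2 ≤ l → l ≤ L → tc l ≤ tb (l - 1))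
    {k : ℕ} (hk : 1 ≤ k) (hkL : k < L) (hstart : τc (k + 1) = τb (k + 1) + tb (k + 1)) :
    τc (k + 1) + tc (k + 1) ≤ τb k + tb k := by
  have hhidden : tc (k + 1) ≤ tb k := hhide (k + 1) (by omega) hkL
  rw [hstart, hτb k hk hkL]
  linarith

theorem comm_start_eq_backward_end
    (hτb : ∀ l, 1 ≤ l → l < L → τb l = τb (l + 1) + tb (l + 1))
    (hτcL : τc L = τb L + tb L)
    (hτc : ∀ l, 1 ≤ l → l < L → τc l = max (τc (l + 1) + tc (l + 1)) (τb l + tb l))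
    (hhide : ∀ l, 2 ≤ l → l ≤ L → tc l ≤ tb (l - 1))
    {l : ℕ} (hl : 1 ≤ l) (hlL : l ≤ L) :
    τc l = τb l + tb l := by
  induction hlL using Nat.decreasingInduction with
  | self => exact hτcL
  | of_succ k hkL ih =>
    rw [hτc k hl hkL, max_eq_right (comm_end_le_backward_end hτb hhide hl hkL (ih (by omega)))]

end WFBP

theorem wfbp_case1_general (L : ℕ) (hL : 1 ≤ L) (tf : ℝ)
    (tb tc τb τc : ℕ → ℝ)
    (hτbL : τb L = tf)
    (hτb : ∀ l, 1 ≤ l → l < L → τb l = τb (l + 1) + tb (l + 1))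
    (hτcL : τc L = τb L + tb L)
    (hτc : ∀ l, 1 ≤ l → l < L → τc l = max (τc (l + 1) + tc (l + 1)) (τb l + tb l))
    (hhide : ∀ l, 2 ≤ l → l ≤ L → tc l ≤ tb (l - 1)) :
    (∀ l, 2 ≤ l → l ≤ L → τc l + tc l ≤ τb (l - 1) + tb (l - 1)) ∧
    τc 1 + tc 1 = tf + (∑ l ∈ Finset.Icc 1 L, tb l) + tc 1 := by
  have hstart : ∀ l, 1 ≤ l → l ≤ L → τc l = τb l + tb l := fun l hl hlL ↦
    WFBP.comm_start_eq_backward_end hτb hτcL hτc hhide hl hlL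
  refine ⟨fun l hl hlL ↦ ?_, ?_⟩
  · obtain ⟨k, rfl⟩ : ∃ k, l = k + 1 := ⟨l - 1, by omega⟩
    exact WFBP.comm_end_le_backward_end hτb hhide (by omega) hlL (hstart (k + 1) (by omega) hlL)
  · rw [hstart 1 le_rfl hL, WFBP.backward_end_eq_add_sum hτbL hτb le_rfl hL]

theorem wfbp_case1 (L : ℕ) (hL : 1 ≤ L) (tf : ℝ) (htf : 0 ≤ tf)
    (tb tc τb τc : ℕ → ℝ) (htb : ∀ l, 0 ≤ tb l) (htc : ∀ l, 0 ≤ tc l)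
    (hτbL : τb L = tf)
    (hτb : ∀ l, 1 ≤ l → l < L → τb l = τb (l + 1) + tb (l + 1))
    (hτcL : τc L = τb L + tb L)
    (hτc : ∀ l, 1 ≤ l → l < L → τc l = max (τc (l + 1) + tc (l + 1)) (τb l + tb l))
    (hhide : ∀ l, 2 ≤ l → l ≤ L → tc l ≤ tb (l - 1)) :
    (∀ l, 2 ≤ l → l ≤ L → τc l + tc l ≤ τb (l - 1) + tb (l - 1)) ∧
    τc 1 + tc 1 = tf + (∑ l ∈ Finset.Icc 1 L, tb l) + tc 1 :=
  wfbp_case1_general L hL tf tb tc τb τc hτbL hτb hτcL hτc hhide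
end

section
/- In the WFBP recursion, the final communication start time satisfies τc(1) = max_{1≤k≤L} (τb(k) + tb(k) + Σ_{j=2}^{k} tc(j)), where the sum Σ_{j=2}^{k} tc(j) denotes the total communication cost of layers 2 through k (empty for k = 1). -/
private lemma wfbp_aux (L : ℕ) (τb tb tc τc : ℕ → ℝ)
    (hτcL : τc L = τb L + tb L)
    (hτc : ∀ l, 1 ≤ l → l < L → τc l = max (τc (l + 1) + tc (l + 1)) (τb l + tb l)) :
    ∀ n l, l + n = L → 1 ≤ l →
      ∀ (h : (Finset.Icc l L).Nonempty),
      τc l = (Finset.Icc l L).sup' h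
        (fun k => τb k + tb k + ∑ j ∈ Finset.Icc (l + 1) k, tc j) := by
  intro n
  induction n with
  | zero =>
    intro l hl _ h
    have hlL : l = L := by omega
    subst hlL
    rw [Finset.sup'_congr h (Finset.Icc_self l) (fun x _ => rfl),
      Finset.sup'_singleton, hτcL]
    rw [Finset.Icc_eq_empty (by omega), Finset.sum_empty, add_zero]
  | succ n ih =>
    intro l hl hl1 h
    have hlL : l < L := by omega
    have hne : (Finset.Icc (l + 1) L).Nonempty := Finset.nonempty_Icc.mpr (by omega)
    have hsplit : Finset.Icc l L = insert l (Finset.Icc (l + 1) L) := by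
      rw [Finset.Icc_add_one_left_eq_Ioc, Finset.Ioc_insert_left (le_of_lt hlL)]
    rw [hτc l hl1 hlL, ih (l + 1) (by omega) (by omega) hne]
    rw [Finset.sup'_congr h hsplit (fun x _ => rfl), Finset.sup'_insert (H := hne)]
    have hgsup : ∀ x y : ℝ, (x ⊔ y) + tc (l + 1) = (x + tc (l + 1)) ⊔ (y + tc (l + 1)) :=
      fun x y => (max_add_add_right x y _).symm
    rw [Finset.comp_sup'_eq_sup'_comp hne (fun x => x + tc (l + 1)) hgsup]
    rw [max_comm]
    congr 1
    · simp [Finset.Icc_eq_empty (show ¬ l + 1 ≤ l by omega)]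
    · apply Finset.sup'_congr hne rfl
      intro k hk
      simp only [Finset.mem_Icc] at hk
      have hk1 : Finset.Icc (l + 1) k = insert (l + 1) (Finset.Icc (l + 2) k) := by
        ext x
        simp only [Finset.mem_Icc, Finset.mem_insert]
        omega
      rw [hk1, Finset.sum_insert (by simp [Finset.mem_Icc])]
      simp only [Function.comp]
      ring

theorem wfbp_comm_start_closed_form (L : ℕ) (hL : 1 ≤ L)
    (τb tb tc τc : ℕ → ℝ) (htb : ∀ l, 0 ≤ tb l) (htc : ∀ l, 0 ≤ tc l)
    (hτcL : τc L = τb L + tb L)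
    (hτc : ∀ l, 1 ≤ l → l < L → τc l = max (τc (l + 1) + tc (l + 1)) (τb l + tb l)) :
    τc 1 = (Finset.Icc 1 L).sup' (Finset.nonempty_Icc.mpr hL)
      (fun k => τb k + tb k + ∑ j ∈ Finset.Icc 2 k, tc j) := by
  have := wfbp_aux L τb tb tc τc hτcL hτc (L - 1) 1 (by omega) le_rfl
    (Finset.nonempty_Icc.mpr hL)
  simpa using this
end

section
/- If layer l (3 ≤ l ≤ L) satisfies τb(l−2) − τc(l) < a, then making layer l a merged-gradient layer strictly decreases the communication finish time of layer l−1: max(τc(l), τb(l−2)) + T(p(l−1) + p(l)) < max(τc(l) + T(p(l)), τb(l−2)) + T(p(l−1)), where T(M) = a + b·M, a > 0, b ≥ 0, p(l), p(l−1) > 0. -/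
/-! With an affine cost `T M = a + b M`, one all-reduce of `p(l-1) + p(l)` costs `a` less than two
separate ones. Merging delays the start of communication from `τc l` to `max (τc l) (τb (l-2))`,
a delay smaller than `a` by hypothesis, so the saved startup latency outweighs it. -/

theorem apply_add_eq_add_sub_of_affine {R : Type*} [CommRing R] {T : R → R} {a b : R}
    (hT : ∀ M, T M = a + b * M) (M N : R) : T (M + N) = T M + T N - a := by
  simp only [hT]
  ring

theorem max_sub_lt_left_of_sub_lt {α : Type*} [AddCommGroup α] [LinearOrder α]
    [IsOrderedAddMonoid α] {x y a : α} (ha : 0 < a) (h : y - x < a) : max x y - a < x :=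
  sub_lt_iff_lt_add'.2 <| max_lt (lt_add_of_pos_left x ha) (sub_lt_iff_lt_add.1 h)

theorem merged_gradient_layer_improves_general (l : ℕ)
    (a b : ℝ) (ha : 0 < a) (τc τb p : ℕ → ℝ)
    (T : ℝ → ℝ) (hT : ∀ M, T M = a + b * M)
    (hcond : τb (l - 2) - τc l < a) :
    max (τc l) (τb (l - 2)) + T (p (l - 1) + p l) <
    max (τc l + T (p l)) (τb (l - 2)) + T (p (l - 1)) := by
  rw [apply_add_eq_add_sub_of_affine hT]
  calc max (τc l) (τb (l - 2)) + (T (p (l - 1)) + T (p l) - a)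
      = max (τc l) (τb (l - 2)) - a + T (p l) + T (p (l - 1)) := by ring
    _ < τc l + T (p l) + T (p (l - 1)) := by
      gcongr
      exact max_sub_lt_left_of_sub_lt ha hcond
    _ ≤ max (τc l + T (p l)) (τb (l - 2)) + T (p (l - 1)) := by
      gcongr
      exact le_max_left _ _

theorem merged_gradient_layer_improves (L l : ℕ) (hl₁ : 3 ≤ l) (hl₂ : l ≤ L)
    (a b : ℝ) (ha : 0 < a) (hb : 0 ≤ b) (τc τb p : ℕ → ℝ)
    (hp₁ : 0 < p l) (hp₂ : 0 < p (l - 1))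
    (T : ℝ → ℝ) (hT : ∀ M, T M = a + b * M)
    (hcond : τb (l - 2) - τc l < a) :
    max (τc l) (τb (l - 2)) + T (p (l - 1) + p l) <
    max (τc l + T (p l)) (τb (l - 2)) + T (p (l - 1)) :=
  merged_gradient_layer_improves_general l a b ha τc τb p T hT hcond
end
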